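/- arXiv:2204.07080 — 4 statements merged into one kernel-verified Lean document; each statement's English description precedes it below -/
import Mathlib

section
/- Consider the Frank-Wolfe iteration on a compact convex set K ⊆ ℝⁿ for a convex differentiable function f with L-Lipschitz gradient: given y⁰ ∈ K, set ȳᵏ ∈ argmin_{y ∈ K} ⟨∇f(yᵏ), y⟩ and yᵏ⁺¹ = (1 − ωₖ) yᵏ + ωₖ ȳᵏ with ωₖ = 2/(k+2). Then for all k ≥ 1, f(yᵏ) − min_{y ∈ K} f(y) ≤ 2 L D² / (k+1), where D is the diameter of K. -/
/-!
Two inequalities drive the argument. Convexity and the choice of `ȳᵏ` give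
`f yᵏ + ⟪∇f yᵏ, ȳᵏ - yᵏ⟫ ≤ min_K f`, and the Lipschitz gradient gives the quadratic upper bound
`f z ≤ f x + ⟪∇f x, z - x⟫ + L/2 ‖z - x‖²`. Applied along the step `yᵏ⁺¹ - yᵏ = ωₖ (ȳᵏ - yᵏ)`,
they turn the gap `hₖ = f yᵏ - min_K f` into a sequence with
`hₖ₊₁ ≤ (1 - ωₖ) hₖ + ωₖ² L D² / 2`, and with `ωₖ = 2/(k+2)` an induction gives
`hₖ ≤ 2 L D² / (k+1)`.
-/

open RealInnerProductSpace

theorem mul_sq_norm_sub_le_mul_sq_diam {E F : Type*} [NormedAddCommGroup E]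
    [SeminormedAddCommGroup F] {g : E → F} {s : Set E} {L : ℝ} {x z : E}
    (hs : Bornology.IsBounded s) (hg : ∀ y ∈ s, ∀ y' ∈ s, ‖g y - g y'‖ ≤ L * ‖y - y'‖)
    (hx : x ∈ s) (hz : z ∈ s) :
    L * ‖z - x‖ ^ 2 ≤ L * Metric.diam s ^ 2 := by
  rcases le_or_gt 0 L with hL | hL
  · gcongr
    rw [← dist_eq_norm]
    exact Metric.dist_le_diam_of_mem hs hz hx
  · have hsub : s.Subsingleton := fun a ha b hb => by
      have hab := hg a ha b hb
      have : ‖a - b‖ ≤ 0 := by nlinarith [norm_nonneg (g a - g b), norm_nonneg (a - b)]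
      exact sub_eq_zero.mp (norm_le_zero_iff.mp this)
    simp [hsub hz hx, Metric.diam_subsingleton hsub]

section Gradient

variable {E : Type*} [NormedAddCommGroup E] [InnerProductSpace ℝ E] [CompleteSpace E]
  {f : E → ℝ} {s : Set E} {L : ℝ} {x z : E}

theorem HasGradientAt.hasDerivAt_comp_add_smul {g v : E} {t : ℝ}
    (hf : HasGradientAt f g (x + t • v)) :
    HasDerivAt (fun t : ℝ => f (x + t • v)) ⟪g, v⟫ t := by
  have hpath : HasDerivAt (fun t : ℝ => x + t • v) v t := by
    simpa using ((hasDerivAt_id t).smul_const v).const_add x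
  exact (hasGradientAt_iff_hasFDerivAt.mp hf).comp_hasDerivAt t hpath

theorem ConvexOn.inner_gradient_sub_le (hf : ConvexOn ℝ s f) (hx : x ∈ s) (hz : z ∈ s)
    (hd : DifferentiableAt ℝ f x) : ⟪gradient f x, z - x⟫ ≤ f z - f x := by
  have hline : ConvexOn ℝ (AffineMap.lineMap x z ⁻¹' s) (fun t : ℝ => f (x + t • (z - x))) := by
    simpa [Function.comp_def, AffineMap.lineMap_apply_module', add_comm] using
      hf.comp_affineMap (AffineMap.lineMap x z)
  have hderiv : HasDerivAt (fun t : ℝ => f (x + t • (z - x))) ⟪gradient f x, z - x⟫ 0 :=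
    HasGradientAt.hasDerivAt_comp_add_smul (by simpa using hd.hasGradientAt)
  simpa [slope] using
    hline.le_slope_of_hasDerivAt (x := 0) (y := 1) (by simpa using hx) (by simpa using hz)
      zero_lt_one hderiv

theorem Convex.le_add_inner_gradient_add_sq (hs : Convex ℝ s)
    (hdiff : ∀ y ∈ s, DifferentiableAt ℝ f y)
    (hlip : ∀ y ∈ s, ∀ y' ∈ s, ‖gradient f y - gradient f y'‖ ≤ L * ‖y - y'‖)
    (hx : x ∈ s) (hz : z ∈ s) :
    f z ≤ f x + ⟪gradient f x, z - x⟫ + L / 2 * ‖z - x‖ ^ 2 := by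
  set v := z - x
  have hseg : ∀ t ∈ Set.Icc (0 : ℝ) 1, x + t • v ∈ s := fun t ht =>
    hs.add_smul_sub_mem hx hz ht
  set ψ : ℝ → ℝ := fun t => f (x + t • v) - t * ⟪gradient f x, v⟫ - L / 2 * ‖v‖ ^ 2 * t ^ 2
  have hψ : ∀ t ∈ Set.Icc (0 : ℝ) 1,
      HasDerivAt ψ (⟪gradient f (x + t • v) - gradient f x, v⟫ - L * ‖v‖ ^ 2 * t) t := by
    intro t ht
    have := (((hdiff _ (hseg t ht)).hasGradientAt.hasDerivAt_comp_add_smul).sub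
      ((hasDerivAt_id t).mul_const ⟪gradient f x, v⟫)).sub
      ((hasDerivAt_pow 2 t).const_mul (L / 2 * ‖v‖ ^ 2))
    refine this.congr_deriv ?_
    rw [inner_sub_left, Nat.cast_ofNat, Nat.add_one_sub_one, pow_one]
    ring
  obtain ⟨c, hc, hslope⟩ := exists_hasDerivAt_eq_slope ψ _ zero_lt_one
    (fun t ht => (hψ t ht).continuousAt.continuousWithinAt)
    (fun t ht => hψ t (Set.Ioo_subset_Icc_self ht))
  have hgrad : ⟪gradient f (x + c • v) - gradient f x, v⟫ ≤ L * ‖v‖ ^ 2 * c := calc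
    _ ≤ ‖gradient f (x + c • v) - gradient f x‖ * ‖v‖ := real_inner_le_norm _ _
    _ ≤ L * ‖(x + c • v) - x‖ * ‖v‖ := by
      gcongr
      exact hlip _ (hseg c (Set.Ioo_subset_Icc_self hc)) x hx
    _ = L * ‖v‖ ^ 2 * c := by
      rw [add_sub_cancel_left, norm_smul, Real.norm_of_nonneg hc.1.le]
      ring
  have hψ10 : ψ 1 ≤ ψ 0 := by
    simp only [sub_zero, div_one] at hslope
    linarith
  simp only [ψ, v, one_smul, add_sub_cancel, zero_smul, add_zero] at hψ10
  linarith

variable {xbar : E}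

theorem ConvexOn.add_inner_gradient_sub_le_sInf_image (hf : ConvexOn ℝ s f) (hx : x ∈ s)
    (hd : DifferentiableAt ℝ f x)
    (hmin : ∀ z ∈ s, ⟪gradient f x, xbar⟫ ≤ ⟪gradient f x, z⟫) :
    f x + ⟪gradient f x, xbar - x⟫ ≤ sInf (f '' s) := by
  refine le_csInf ⟨f x, x, hx, rfl⟩ ?_
  rintro _ ⟨z, hz, rfl⟩
  have hfirst := hf.inner_gradient_sub_le hx hz hd
  have hz_min := hmin z hz
  rw [inner_sub_right] at hfirst ⊢
  linarith

theorem ConvexOn.frankWolfe_step_gap_le (hf : ConvexOn ℝ s f)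
    (hdiff : ∀ y ∈ s, DifferentiableAt ℝ f y)
    (hlip : ∀ y ∈ s, ∀ y' ∈ s, ‖gradient f y - gradient f y'‖ ≤ L * ‖y - y'‖)
    (hbdd : Bornology.IsBounded s) (hx : x ∈ s) (hxbar : xbar ∈ s)
    (hmin : ∀ z ∈ s, ⟪gradient f x, xbar⟫ ≤ ⟪gradient f x, z⟫)
    {ω : ℝ} (hω₀ : 0 ≤ ω) (hω₁ : ω ≤ 1) :
    f ((1 - ω) • x + ω • xbar) - sInf (f '' s) ≤
      (1 - ω) * (f x - sInf (f '' s)) + ω ^ 2 * (L * Metric.diam s ^ 2) / 2 := by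
  have hstep : (1 - ω) • x + ω • xbar - x = ω • (xbar - x) := by module
  have hmem : (1 - ω) • x + ω • xbar ∈ s :=
    hf.1 hx hxbar (sub_nonneg.2 hω₁) hω₀ (sub_add_cancel 1 ω)
  have hdescent := hf.1.le_add_inner_gradient_add_sq hdiff hlip hx hmem
  rw [hstep, real_inner_smul_right, norm_smul, Real.norm_of_nonneg hω₀, mul_pow] at hdescent
  have hgap := mul_le_mul_of_nonneg_left
    (hf.add_inner_gradient_sub_le_sInf_image hx (hdiff x hx) hmin) hω₀
  have hquad := mul_le_mul_of_nonneg_left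
    (mul_sq_norm_sub_le_mul_sq_diam hbdd hlip hx hxbar) (sq_nonneg ω)
  linarith

end Gradient

theorem two_div_nat_add_two_mem_Icc (k : ℕ) : 2 / ((k : ℝ) + 2) ∈ Set.Icc (0 : ℝ) 1 :=
  ⟨by positivity, (div_le_one (by positivity)).2 (by linarith [(k.cast_nonneg : (0 : ℝ) ≤ k)])⟩

theorem le_two_mul_div_of_frankWolfe_recurrence {h : ℕ → ℝ} {C : ℝ} (hC : 0 ≤ C)
    (hrec : ∀ k : ℕ,
      h (k + 1) ≤ (1 - 2 / ((k : ℝ) + 2)) * h k + (2 / ((k : ℝ) + 2)) ^ 2 * C / 2) :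
    ∀ k : ℕ, 1 ≤ k → h k ≤ 2 * C / ((k : ℝ) + 1) := by
  intro k hk
  induction k, hk using Nat.le_induction with
  | base =>
    have h₁ := hrec 0
    norm_num at h₁ ⊢
    linarith
  | succ k _ ih =>
    have hcoef : 0 ≤ 1 - 2 / ((k : ℝ) + 2) := sub_nonneg.2 (two_div_nat_add_two_mem_Icc k).2
    calc h (k + 1)
        ≤ (1 - 2 / ((k : ℝ) + 2)) * (2 * C / ((k : ℝ) + 1))
            + (2 / ((k : ℝ) + 2)) ^ 2 * C / 2 := (hrec k).trans (by gcongr)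
      _ = 2 * C / ((k : ℝ) + 2) - 2 * C / (((k : ℝ) + 1) * ((k : ℝ) + 2) ^ 2) := by
          field_simp
          ring
      _ ≤ 2 * C / (((k + 1 : ℕ) : ℝ) + 1) := by
          push_cast
          rw [add_assoc, one_add_one_eq_two, sub_le_self_iff]
          positivity

theorem frank_wolfe_convergence_general
    {n : ℕ} (f : EuclideanSpace ℝ (Fin n) → ℝ)
    (K : Set (EuclideanSpace ℝ (Fin n))) (L : ℝ)
    (hKcomp : IsCompact K)
    (hconv : ConvexOn ℝ K f)
    (hdiff : ∀ x ∈ K, DifferentiableAt ℝ f x)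
    (hlip : ∀ x ∈ K, ∀ y ∈ K, ‖gradient f x - gradient f y‖ ≤ L * ‖x - y‖)
    (y ybar : ℕ → EuclideanSpace ℝ (Fin n))
    (hy0 : y 0 ∈ K)
    (hbar : ∀ k, ybar k ∈ K ∧
      ∀ z ∈ K, ⟪gradient f (y k), ybar k⟫ ≤ ⟪gradient f (y k), z⟫)
    (hupd : ∀ k, y (k + 1)
      = (1 - 2 / ((k : ℝ) + 2)) • y k + (2 / ((k : ℝ) + 2)) • ybar k) :
    ∀ k : ℕ, 1 ≤ k →
      f (y k) - sInf (f '' K) ≤ 2 * L * Metric.diam K ^ 2 / ((k : ℝ) + 1) := by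
  have hyK : ∀ k, y k ∈ K := by
    intro k
    induction k with
    | zero => exact hy0
    | succ k ih =>
      obtain ⟨h₀, h₁⟩ := two_div_nat_add_two_mem_Icc k
      rw [hupd k]
      exact hconv.1 ih (hbar k).1 (sub_nonneg.2 h₁) h₀ (sub_add_cancel 1 _)
  have hC : 0 ≤ L * Metric.diam K ^ 2 := by
    simpa using mul_sq_norm_sub_le_mul_sq_diam hKcomp.isBounded hlip hy0 hy0
  intro k hk
  rw [mul_assoc]
  refine le_two_mul_div_of_frankWolfe_recurrence (h := fun k => f (y k) - sInf (f '' K)) hC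
    (fun k => ?_) k hk
  obtain ⟨h₀, h₁⟩ := two_div_nat_add_two_mem_Icc k
  rw [hupd k]
  exact hconv.frankWolfe_step_gap_le hdiff hlip hKcomp.isBounded (hyK k) (hbar k).1 (hbar k).2 h₀ h₁

theorem frank_wolfe_convergence
    {n : ℕ} (f : EuclideanSpace ℝ (Fin n) → ℝ)
    (K : Set (EuclideanSpace ℝ (Fin n))) (L : ℝ)
    (hKne : K.Nonempty) (hKcomp : IsCompact K) (hKconv : Convex ℝ K)
    (hconv : ConvexOn ℝ K f)
    (hdiff : ∀ x ∈ K, DifferentiableAt ℝ f x)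
    (hlip : ∀ x ∈ K, ∀ y ∈ K, ‖gradient f x - gradient f y‖ ≤ L * ‖x - y‖)
    (y ybar : ℕ → EuclideanSpace ℝ (Fin n))
    (hy0 : y 0 ∈ K)
    (hbar : ∀ k, ybar k ∈ K ∧
      ∀ z ∈ K, ⟪gradient f (y k), ybar k⟫ ≤ ⟪gradient f (y k), z⟫)
    (hupd : ∀ k, y (k + 1)
      = (1 - 2 / ((k : ℝ) + 2)) • y k + (2 / ((k : ℝ) + 2)) • ybar k) :
    ∀ k : ℕ, 1 ≤ k →
      f (y k) - sInf (f '' K) ≤ 2 * L * Metric.diam K ^ 2 / ((k : ℝ) + 1) :=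
  frank_wolfe_convergence_general f K L hKcomp hconv hdiff hlip y ybar hy0 hbar hupd
end

section
/- (Shapley–Folkman / Starr.) Let Y₁, …, Y_N be nonempty compact subsets of ℝᵈ with N > d, and let Y = ∑_{i=1}^N Y_i. Then every point y ∈ conv(Y) can be written as y = ∑_{i=1}^N y_i with y_i ∈ conv(Y_i) for all i and y_i ∈ Y_i for all but at most d indices i. -/
open Pointwise Finset

/-!
Convex hulls commute with Minkowski sums, so `y = ∑ i, x i` with each `x i` a convex combination
of points of `Y i`. Lift a point `u` of `Y i` to `(u, eᵢ) ∈ E × (ι → 𝕜)`: then `(y, 1)` is a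
nonnegative combination of lifts, and by the conic Carathéodory theorem of at most
`finrank E + card ι` linearly independent ones. Every block `i` still carries total weight one, so
it uses at least one lift; hence at most `finrank E` blocks use two or more, and every other block
is a single point of `Y i`.
-/

section ConicCaratheodory

variable {𝕜 V α : Type*} [Field 𝕜] [LinearOrder 𝕜] [IsStrictOrderedRing 𝕜]
  [AddCommGroup V] [Module 𝕜 V] {v : α → V}

lemma exists_pos_of_not_linearIndepOn {s : Finset α} (h : ¬LinearIndepOn 𝕜 v s) :
    ∃ c : α → 𝕜, ∑ a ∈ s, c a • v a = 0 ∧ ∃ a ∈ s, 0 < c a := by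
  obtain ⟨c, hc, a, ha, hca⟩ := not_linearIndepOn_finset_iff.mp h
  rcases hca.lt_or_gt with hneg | hpos
  · exact ⟨-c, by simp [neg_smul, hc], a, ha, by simpa using hneg⟩
  · exact ⟨c, hc, a, ha, hpos⟩

lemma exists_nonneg_sum_erase_of_not_linearIndepOn [DecidableEq α] {s : Finset α} {μ : α → 𝕜}
    (hμ : ∀ a ∈ s, 0 ≤ μ a) (h : ¬LinearIndepOn 𝕜 v s) :
    ∃ b ∈ s, ∃ ν : α → 𝕜, (∀ a ∈ s.erase b, 0 ≤ ν a) ∧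
      ∑ a ∈ s.erase b, ν a • v a = ∑ a ∈ s, μ a • v a := by
  obtain ⟨c, hc, a₁, ha₁, hca₁⟩ := exists_pos_of_not_linearIndepOn h
  -- `μ - t * c` for the largest `t` keeping it nonnegative; it vanishes at some `b`.
  obtain ⟨b, hb, hmin⟩ := {a ∈ s | 0 < c a}.exists_min_image (fun a => μ a / c a)
    ⟨a₁, mem_filter.mpr ⟨ha₁, hca₁⟩⟩
  rw [mem_filter] at hb
  set t := μ b / c b
  have ht : 0 ≤ t := div_nonneg (hμ b hb.1) hb.2.le
  have hν : ∀ a ∈ s, 0 ≤ μ a - t * c a := by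
    intro a ha
    rcases le_or_gt (c a) 0 with hca | hca
    · nlinarith [hμ a ha]
    · have := hmin a (mem_filter.mpr ⟨ha, hca⟩)
      rw [le_div_iff₀ hca] at this
      linarith
  have hνb : μ b - t * c b = 0 := by simp [t, div_mul_cancel₀ _ hb.2.ne']
  refine ⟨b, hb.1, fun a => μ a - t * c a, fun a ha => hν a (mem_of_mem_erase ha), ?_⟩
  rw [sum_erase _ (by simp only [hνb, zero_smul])]
  simp only [sub_smul, mul_smul, sum_sub_distrib, ← smul_sum, hc, smul_zero, sub_zero]

theorem exists_linearIndepOn_nonneg_sum_eq [DecidableEq α] (v : α → V) (s : Finset α)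
    {μ : α → 𝕜} (hμ : ∀ a ∈ s, 0 ≤ μ a) :
    ∃ t ⊆ s, LinearIndepOn 𝕜 v t ∧ ∃ ν : α → 𝕜, (∀ a ∈ t, 0 ≤ ν a) ∧
      ∑ a ∈ t, ν a • v a = ∑ a ∈ s, μ a • v a := by
  induction s using Finset.strongInduction generalizing μ with
  | H s ih =>
  by_cases hs : LinearIndepOn 𝕜 v s
  · exact ⟨s, subset_rfl, hs, μ, hμ, rfl⟩
  obtain ⟨b, hb, ν, hν, hsum⟩ := exists_nonneg_sum_erase_of_not_linearIndepOn hμ hs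
  obtain ⟨t, hts, ht, ν', hν', hsum'⟩ := ih _ (erase_ssubset hb) hν
  exact ⟨t, hts.trans (erase_subset b s), ht, ν', hν', hsum'.trans hsum⟩

end ConicCaratheodory

lemma card_filter_one_lt_card_fiber_add_card_le {α ι : Type*} [Fintype ι] [DecidableEq ι]
    {t : Finset α} (f : α → ι) (ht : ∀ i, {a ∈ t | f a = i}.Nonempty) :
    #{i | 1 < #{a ∈ t | f a = i}} + Fintype.card ι ≤ #t := by
  rw [card_eq_sum_card_fiberwise (fun a _ => mem_univ (f a)), card_filter, ← card_univ,
    card_eq_sum_ones, ← sum_add_distrib]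
  refine sum_le_sum fun i _ => ?_
  have := (ht i).card_pos
  split_ifs <;> omega

lemma sum_smul_mem_of_card_le_one {α R E : Type*} [Semiring R] [Nontrivial R] [AddCommMonoid E]
    [Module R E] {s : Finset α} {w : α → R} {u : α → E} {S : Set E} (hs : #s ≤ 1)
    (hw : ∑ a ∈ s, w a = 1) (hu : ∀ a ∈ s, u a ∈ S) : ∑ a ∈ s, w a • u a ∈ S := by
  have hne : s.Nonempty := nonempty_of_sum_ne_zero (hw ▸ one_ne_zero)
  obtain ⟨a, rfl⟩ := card_eq_one.mp (le_antisymm hs hne.card_pos)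
  rw [sum_singleton] at hw ⊢
  rw [hw, one_smul]
  exact hu a (mem_singleton_self a)

theorem exists_sum_eq_of_mem_convexHull_sum {𝕜 ι E : Type*} [Field 𝕜] [LinearOrder 𝕜]
    [IsStrictOrderedRing 𝕜] [Fintype ι] [AddCommGroup E] [Module 𝕜 E] [FiniteDimensional 𝕜 E]
    (Y : ι → Set E) {y : E} (hy : y ∈ convexHull 𝕜 (∑ i, Y i)) :
    ∃ z : ι → E, y = ∑ i, z i ∧ (∀ i, z i ∈ convexHull 𝕜 (Y i)) ∧
      ∃ B : Finset ι, #B ≤ Module.finrank 𝕜 E ∧ ∀ i ∉ B, z i ∈ Y i := by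
  classical
  rw [convexHull_sum, Set.mem_fintype_sum] at hy
  obtain ⟨x, hx, rfl⟩ := hy
  choose κ _ w u hw0 hw1 hu hwu using fun i => mem_convexHull_iff_exists_fintype.mp (hx i)
  let lift : (Σ i, κ i) → E × (ι → 𝕜) := fun p => (u p.1 p.2, Pi.single p.1 1)
  obtain ⟨t, -, hind, ν, hν, hsum⟩ :=
    exists_linearIndepOn_nonneg_sum_eq lift univ (μ := fun p => w p.1 p.2) fun p _ => hw0 p.1 p.2
  have hpoint : ∑ p ∈ t, ν p • u p.1 p.2 = ∑ i, x i := by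
    simpa [lift, Prod.fst_sum, Fintype.sum_sigma, hwu] using congrArg Prod.fst hsum
  have hblock : ∀ i, ∑ p ∈ t with p.1 = i, ν p = 1 := by
    intro i
    simpa [lift, Prod.snd_sum, Pi.single_apply, sum_filter, Fintype.sum_sigma, hw1, eq_comm]
      using congrFun (congrArg Prod.snd hsum) i
  have hcard : #t ≤ Module.finrank 𝕜 E + Fintype.card ι := by
    simpa [Module.finrank_prod] using hind.fintype_card_le_finrank
  have hmem : ∀ i, ∀ p ∈ {p ∈ t | p.1 = i}, u p.1 p.2 ∈ Y i := by
    rintro i p hp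
    obtain ⟨-, rfl⟩ := mem_filter.mp hp
    exact hu _ _
  refine ⟨fun i => ∑ p ∈ t with p.1 = i, ν p • u p.1 p.2, ?_, fun i => ?_,
    ({i | 1 < #{p ∈ t | p.1 = i}} : Finset ι), ?_, fun i hi => ?_⟩
  · exact hpoint.symm.trans (sum_fiberwise t Sigma.fst _).symm
  · exact (convex_convexHull 𝕜 _).sum_mem (fun p hp => hν p (mem_filter.mp hp).1) (hblock i)
      fun p hp => subset_convexHull 𝕜 _ (hmem i p hp)
  · have := card_filter_one_lt_card_fiber_add_card_le Sigma.fst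
      fun i => nonempty_of_sum_ne_zero ((hblock i).symm ▸ one_ne_zero)
    omega
  · exact sum_smul_mem_of_card_le_one (by simpa using hi) (hblock i) (hmem i)

theorem shapley_folkman_general
    (d N : ℕ)
    (Y : Fin N → Set (EuclideanSpace ℝ (Fin d))) :
    ∀ y ∈ convexHull ℝ (∑ i, Y i),
      ∃ z : Fin N → EuclideanSpace ℝ (Fin d),
        y = ∑ i, z i ∧ (∀ i, z i ∈ convexHull ℝ (Y i)) ∧
        ∃ B : Finset (Fin N), B.card ≤ d ∧ ∀ i ∉ B, z i ∈ Y i := by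
  intro y hy
  simpa only [finrank_euclideanSpace_fin] using exists_sum_eq_of_mem_convexHull_sum Y hy

theorem shapley_folkman
    (d N : ℕ) (hdN : d < N)
    (Y : Fin N → Set (EuclideanSpace ℝ (Fin d)))
    (hne : ∀ i, (Y i).Nonempty) (hcomp : ∀ i, IsCompact (Y i)) :
    ∀ y ∈ convexHull ℝ (∑ i, Y i),
      ∃ z : Fin N → EuclideanSpace ℝ (Fin d),
        y = ∑ i, z i ∧ (∀ i, z i ∈ convexHull ℝ (Y i)) ∧
        ∃ B : Finset (Fin N), B.card ≤ d ∧ ∀ i ∉ B, z i ∈ Y i :=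
  shapley_folkman_general d N Y
end

section
/- (Equivalence of the optimal control problem and its MICP formulation, easy direction.) Given a feasible state-control trajectory (s,u) for the finite-state optimal control problem, define m_i^t(z) = 1 if z = (s_i^t, u_i^t) and 0 otherwise, for each agent i, time t, and z ∈ Z_i^t = {(s,u) : u ∈ U_i^t(s)}. Then m satisfies the MICP constraints (integrality, nonnegativity, unit mass at each (i,t), zero mass on infeasible initial states, and the flow-conservation constraint ∑_{u ∈ U_i^θ(s)} m_i^θ(s,u) = ∑_{z ∈ (π_i^{θ−1})^{-1}(s)} m_i^{θ−1}(z)), and the MICP objective evaluated at m equals J(s,u). -/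
/-! Each `m i t` is the indicator of the point `(s i t, u i t)`, which lies in the feasible set
`Z i t` because the trajectory is feasible. Hence every weighted sum over `Z i t` collapses to the
weight at that point: this gives unit mass and the objective, while flow conservation reduces to
the dynamics `s i (t + 1) = π i t (s i t) (u i t)`. -/

open Finset

section IndicatorSums

variable {α β R : Type*} [DecidableEq α] [DecidableEq β] [NonAssocSemiring R]

theorem Finset.sum_mul_ite_eq_of_mem {s : Finset α} {a : α} (ha : a ∈ s) (g : α → R) :
    ∑ z ∈ s, g z * (if z = a then 1 else 0) = g a := by
  simp [ha]

theorem Finset.sum_filter_ite_eq_of_mem {s : Finset α} {a : α} (ha : a ∈ s)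
    (p : α → Prop) [DecidablePred p] :
    ∑ z ∈ s.filter p, (if z = a then (1 : R) else 0) = if p a then 1 else 0 := by
  simp [ha]

theorem Finset.sum_ite_prodMk_eq {B : Finset β} {a : α × β} {x : α}
    (ha : x = a.1 → a.2 ∈ B) :
    ∑ b ∈ B, (if (x, b) = a then (1 : R) else 0) = if x = a.1 then 1 else 0 := by
  obtain ⟨a₁, a₂⟩ := a
  by_cases hx : x = a₁
  · simp [hx, ha hx]
  · simp [hx]

end IndicatorSums

theorem micp_easy_direction_general
    {N T : ℕ}
    (S U : Fin N → Type*)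
    [∀ i, Fintype (S i)] [∀ i, Fintype (U i)]
    [∀ i, DecidableEq (S i)] [∀ i, DecidableEq (U i)]
    (Uc : ∀ i : Fin N, ℕ → S i → Finset (U i))
    (π : ∀ i : Fin N, ℕ → S i → U i → S i)
    (S0 : ∀ i : Fin N, Finset (S i))
    (h ℓ : ∀ i : Fin N, ℕ → S i → U i → ℝ)
    (f : ℕ → ℝ → ℝ)
    -- the feasible state-control trajectory
    (s : ∀ i : Fin N, ℕ → S i) (u : ∀ i : Fin N, ℕ → U i)
    (hs0 : ∀ i, s i 0 ∈ S0 i)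
    (hu : ∀ i, ∀ t ≤ T, u i t ∈ Uc i t (s i t))
    (hdyn : ∀ i, ∀ t < T, s i (t + 1) = π i t (s i t) (u i t))
    -- the induced MICP variable
    (m : ∀ i : Fin N, ℕ → S i × U i → ℝ)
    (hm : ∀ i t z, m i t z = if z = (s i t, u i t) then (1 : ℝ) else 0) :
    -- the feasible sets Z_i^t
    let Z : ∀ i : Fin N, ℕ → Finset (S i × U i) :=
      fun i t => Finset.univ.filter fun z => z.2 ∈ Uc i t z.1
    -- (i) integrality
    (∀ i t z, ∃ k : ℤ, m i t z = (k : ℝ)) ∧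
    -- (ii) nonnegativity and unit mass
    (∀ i t z, 0 ≤ m i t z) ∧
    (∀ i, ∀ t ≤ T, ∑ z ∈ Z i t, m i t z = 1) ∧
    -- (iii) zero mass on infeasible initial states
    (∀ i, ∀ z ∈ Z i 0, z.1 ∉ S0 i → m i 0 z = 0) ∧
    -- (iv) flow conservation
    (∀ i, ∀ θ, 1 ≤ θ → θ ≤ T → ∀ s' : S i,
      ∑ uθ ∈ Uc i θ s', m i θ (s', uθ)
        = ∑ z ∈ (Z i (θ - 1)).filter (fun z => π i (θ - 1) z.1 z.2 = s'),
            m i (θ - 1) z) ∧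
    -- objective values coincide
    (∑ t ∈ Finset.range (T + 1),
        f t ((N : ℝ)⁻¹ * ∑ i, ∑ z ∈ Z i t, h i t z.1 z.2 * m i t z)
      + (N : ℝ)⁻¹ * ∑ t ∈ Finset.range (T + 1), ∑ i, ∑ z ∈ Z i t,
          ℓ i t z.1 z.2 * m i t z
      = ∑ t ∈ Finset.range (T + 1),
          f t ((N : ℝ)⁻¹ * ∑ i, h i t (s i t) (u i t))
        + (N : ℝ)⁻¹ * ∑ i, ∑ t ∈ Finset.range (T + 1),
            ℓ i t (s i t) (u i t)) := by
  intro Z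
  obtain rfl : m = fun i t z => if z = (s i t, u i t) then 1 else 0 := by
    funext i t z
    exact hm i t z
  have hmem : ∀ i, ∀ t ≤ T, (s i t, u i t) ∈ Z i t := fun i t ht => by
    simp [Z, hu i t ht]
  have hcollapse : ∀ t ∈ range (T + 1), ∀ i (g : S i → U i → ℝ),
      ∑ z ∈ Z i t, g z.1 z.2 * (if z = (s i t, u i t) then 1 else 0) = g (s i t) (u i t) :=
    fun t ht i g => sum_mul_ite_eq_of_mem (hmem i t (by simpa [Nat.lt_succ_iff] using ht)) _
  refine ⟨fun i t z => ?_, fun i t z => by positivity, fun i t ht => ?_,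
    fun i z _ hz => if_neg (by rintro rfl; exact hz (hs0 i)), fun i θ hθ hθT s' => ?_, ?_⟩
  · exact ⟨if z = (s i t, u i t) then 1 else 0, by push_cast; rfl⟩
  · simpa using sum_mul_ite_eq_of_mem (hmem i t ht) (1 : S i × U i → ℝ)
  · obtain ⟨t, rfl⟩ : ∃ t, θ = t + 1 := ⟨θ - 1, by omega⟩
    rw [Nat.add_sub_cancel, sum_ite_prodMk_eq fun hs' => hs' ▸ hu i (t + 1) hθT,
      sum_filter_ite_eq_of_mem (hmem i t (by omega)), ← hdyn i t hθT]
    simp only [eq_comm]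
  · rw [sum_comm (s := range (T + 1))]
    congr 1
    · exact sum_congr rfl fun t ht => by
        rw [sum_congr rfl fun i _ => hcollapse t ht i (h i t)]
    · exact congrArg _ <| sum_congr rfl fun i _ =>
        sum_congr rfl fun t ht => hcollapse t ht i (ℓ i t)

theorem micp_easy_direction
    {N T : ℕ} (hN : 0 < N)
    (S U : Fin N → Type*)
    [∀ i, Fintype (S i)] [∀ i, Fintype (U i)]
    [∀ i, DecidableEq (S i)] [∀ i, DecidableEq (U i)]
    (Uc : ∀ i : Fin N, ℕ → S i → Finset (U i))
    (π : ∀ i : Fin N, ℕ → S i → U i → S i)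
    (S0 : ∀ i : Fin N, Finset (S i))
    (h ℓ : ∀ i : Fin N, ℕ → S i → U i → ℝ)
    (f : ℕ → ℝ → ℝ)
    -- the feasible state-control trajectory
    (s : ∀ i : Fin N, ℕ → S i) (u : ∀ i : Fin N, ℕ → U i)
    (hs0 : ∀ i, s i 0 ∈ S0 i)
    (hu : ∀ i, ∀ t ≤ T, u i t ∈ Uc i t (s i t))
    (hdyn : ∀ i, ∀ t < T, s i (t + 1) = π i t (s i t) (u i t))
    -- the induced MICP variable
    (m : ∀ i : Fin N, ℕ → S i × U i → ℝ)
    (hm : ∀ i t z, m i t z = if z = (s i t, u i t) then (1 : ℝ) else 0) :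
    -- the feasible sets Z_i^t
    let Z : ∀ i : Fin N, ℕ → Finset (S i × U i) :=
      fun i t => Finset.univ.filter fun z => z.2 ∈ Uc i t z.1
    -- (i) integrality
    (∀ i t z, ∃ k : ℤ, m i t z = (k : ℝ)) ∧
    -- (ii) nonnegativity and unit mass
    (∀ i t z, 0 ≤ m i t z) ∧
    (∀ i, ∀ t ≤ T, ∑ z ∈ Z i t, m i t z = 1) ∧
    -- (iii) zero mass on infeasible initial states
    (∀ i, ∀ z ∈ Z i 0, z.1 ∉ S0 i → m i 0 z = 0) ∧
    -- (iv) flow conservation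
    (∀ i, ∀ θ, 1 ≤ θ → θ ≤ T → ∀ s' : S i,
      ∑ uθ ∈ Uc i θ s', m i θ (s', uθ)
        = ∑ z ∈ (Z i (θ - 1)).filter (fun z => π i (θ - 1) z.1 z.2 = s'),
            m i (θ - 1) z) ∧
    -- objective values coincide
    (∑ t ∈ Finset.range (T + 1),
        f t ((N : ℝ)⁻¹ * ∑ i, ∑ z ∈ Z i t, h i t z.1 z.2 * m i t z)
      + (N : ℝ)⁻¹ * ∑ t ∈ Finset.range (T + 1), ∑ i, ∑ z ∈ Z i t,
          ℓ i t z.1 z.2 * m i t z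
      = ∑ t ∈ Finset.range (T + 1),
          f t ((N : ℝ)⁻¹ * ∑ i, h i t (s i t) (u i t))
        + (N : ℝ)⁻¹ * ∑ i, ∑ t ∈ Finset.range (T + 1),
            ℓ i t (s i t) (u i t)) :=
  micp_easy_direction_general S U Uc π S0 h ℓ f s u hs0 hu hdyn m hm
end

section
/- (MICP feasible points encode trajectories.) If m satisfies the MICP constraints—m_i^t(z) ∈ {0,1}, ∑_{z ∈ Z_i^t} m_i^t(z) = 1, m_i^0(s,u) = 0 whenever s ∉ S_i^0, and the flow-conservation constraint—then for each agent i and time t there is a unique pair (s_i^t, u_i^t) ∈ Z_i^t with m_i^t(s_i^t,u_i^t) = 1, and the resulting (s,u) is a feasible trajectory: s_i^0 ∈ S_i^0, u_i^t ∈ U_i^t(s_i^t), and s_i^{t+1} = π_i^t(s_i^t, u_i^t). -/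
/-!
A `0/1`-valued function with total mass `1` on a finite set takes the value `1` exactly once,
so each time slice of `m` selects a unique pair `(s, u)`. Flow conservation at time `t + 1`,
evaluated at the state `π t s u` reached from the selected pair, has right-hand side `1`; hence
some control at that state carries mass `1` at time `t + 1`, and by uniqueness that pair is the
selected one.
-/

open Finset

theorem Finset.sum_eq_one_iff_existsUnique_of_zero_or_one {ι : Type*} {s : Finset ι}
    {f : ι → ℝ} (hf : ∀ a ∈ s, f a = 0 ∨ f a = 1) :
    ∑ a ∈ s, f a = 1 ↔ ∃! a, a ∈ s ∧ f a = 1 := by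
  classical
  have hsum : ∑ a ∈ s, f a = #(s.filter fun a => f a = 1) := by
    rw [card_filter, Nat.cast_sum]
    refine sum_congr rfl fun a ha => ?_
    rcases hf a ha with h | h <;> simp [h]
  rw [hsum, Nat.cast_eq_one, card_eq_one_iff_existsUnique]
  simp only [mem_filter]

theorem fst_eq_transition_of_flow {σ α : Type*} [Fintype σ] [Fintype α] [DecidableEq σ]
    [DecidableEq α] {Uc : ℕ → σ → Finset α} {π : ℕ → σ → α → σ} {m : ℕ → σ × α → ℝ}
    {Z : ℕ → Finset (σ × α)} {t : ℕ} {z z' : σ × α}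
    (hZ : Z (t + 1) = univ.filter fun y => y.2 ∈ Uc (t + 1) y.1)
    (h01 : ∀ t y, m t y = 0 ∨ m t y = 1)
    (huniq : ∃! y, y ∈ Z t ∧ m t y = 1) (hz : z ∈ Z t ∧ m t z = 1)
    (huniq' : ∃! y, y ∈ Z (t + 1) ∧ m (t + 1) y = 1) (hz' : z' ∈ Z (t + 1) ∧ m (t + 1) z' = 1)
    (hflow : ∑ u ∈ Uc (t + 1) (π t z.1 z.2), m (t + 1) (π t z.1 z.2, u)
      = ∑ y ∈ (Z t).filter (fun y => π t y.1 y.2 = π t z.1 z.2), m t y) :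
    z'.1 = π t z.1 z.2 := by
  have hinflow : ∑ y ∈ (Z t).filter (fun y => π t y.1 y.2 = π t z.1 z.2), m t y = 1 :=
    (sum_eq_one_iff_existsUnique_of_zero_or_one fun y _ => h01 t y).2
      ⟨z, ⟨mem_filter.2 ⟨hz.1, rfl⟩, hz.2⟩,
        fun y hy => huniq.unique ⟨(mem_filter.1 hy.1).1, hy.2⟩ hz⟩
  obtain ⟨u, ⟨hu, hmu⟩, -⟩ :=
    (sum_eq_one_iff_existsUnique_of_zero_or_one fun u _ => h01 (t + 1) _).1
      (hflow.trans hinflow)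
  have hmem : (π t z.1 z.2, u) ∈ Z (t + 1) := by
    rw [hZ, mem_filter]
    exact ⟨mem_univ _, hu⟩
  rw [huniq'.unique hz' ⟨hmem, hmu⟩]

theorem micp_encodes_trajectories
    {N T : ℕ}
    (S U : Fin N → Type*)
    [∀ i, Fintype (S i)] [∀ i, Fintype (U i)]
    [∀ i, DecidableEq (S i)] [∀ i, DecidableEq (U i)]
    (Uc : ∀ i : Fin N, ℕ → S i → Finset (U i))
    (π : ∀ i : Fin N, ℕ → S i → U i → S i)
    (S0 : ∀ i : Fin N, Finset (S i))
    (m : ∀ i : Fin N, ℕ → S i × U i → ℝ)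
    (Z : ∀ i : Fin N, ℕ → Finset (S i × U i))
    (hZ : ∀ i t, Z i t = Finset.univ.filter fun z => z.2 ∈ Uc i t z.1)
    -- MICP constraints
    (h01 : ∀ i t z, m i t z = 0 ∨ m i t z = 1)
    (hmass : ∀ i, ∀ t ≤ T, ∑ z ∈ Z i t, m i t z = 1)
    (hinit : ∀ i, ∀ z ∈ Z i 0, z.1 ∉ S0 i → m i 0 z = 0)
    (hflow : ∀ i, ∀ θ, 1 ≤ θ → θ ≤ T → ∀ s' : S i,
      ∑ uθ ∈ Uc i θ s', m i θ (s', uθ)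
        = ∑ z ∈ (Z i (θ - 1)).filter (fun z => π i (θ - 1) z.1 z.2 = s'),
            m i (θ - 1) z) :
    -- uniqueness of the unit-mass pair
    (∀ i, ∀ t ≤ T, ∃! z : S i × U i, z ∈ Z i t ∧ m i t z = 1) ∧
    -- the induced trajectory is feasible
    (∃ (s : ∀ i : Fin N, ℕ → S i) (u : ∀ i : Fin N, ℕ → U i),
      (∀ i, s i 0 ∈ S0 i) ∧
      (∀ i, ∀ t ≤ T, u i t ∈ Uc i t (s i t)) ∧
      (∀ i, ∀ t < T, s i (t + 1) = π i t (s i t) (u i t)) ∧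
      (∀ i, ∀ t ≤ T, m i t (s i t, u i t) = 1)) := by
  have key : ∀ i, ∀ t ≤ T, ∃! z : S i × U i, z ∈ Z i t ∧ m i t z = 1 := fun i t ht =>
    (sum_eq_one_iff_existsUnique_of_zero_or_one fun z _ => h01 i t z).1 (hmass i t ht)
  -- Beyond the horizon `T` the trajectory is irrelevant; reuse the time-`0` pair there.
  have hsel : ∀ i t, ∃ z : S i × U i, t ≤ T → z ∈ Z i t ∧ m i t z = 1 := fun i t =>
    if ht : t ≤ T then (key i t ht).exists.imp fun _ hz _ => hz
    else ⟨(key i 0 T.zero_le).exists.choose, fun h => absurd h ht⟩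
  choose z hz using hsel
  refine ⟨key, fun i t => (z i t).1, fun i t => (z i t).2, fun i => ?_, fun i t ht => ?_,
    fun i t ht => ?_, fun i t ht => (hz i t ht).2⟩
  · by_contra hS0
    exact one_ne_zero ((hz i 0 T.zero_le).2.symm.trans (hinit i _ (hz i 0 T.zero_le).1 hS0))
  · have hmem := (hz i t ht).1
    rw [hZ, mem_filter] at hmem
    exact hmem.2
  · have hflow_t := hflow i (t + 1) (Nat.le_add_left 1 t) ht (π i t (z i t).1 (z i t).2)
    rw [Nat.add_sub_cancel] at hflow_t
    exact fst_eq_transition_of_flow (hZ i (t + 1)) (h01 i) (key i t ht.le) (hz i t ht.le)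
      (key i (t + 1) ht) (hz i (t + 1) ht) hflow_t
end
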